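/- arXiv:2410.21084 — 2 statements merged into one kernel-verified Lean document; each statement's English description precedes it below -/
import Mathlib

section
/- Let n ≥ 3, and fix k with 1 ≤ k ≤ n−1. Let D_k be the set of partial strong endomorphisms α of the star graph S_n such that {1,...,k} ⊆ im(α) and either (0 ∈ dom(α) and 0α = 0) or (0 ∉ dom(α) and |im(α)| ≥ 2). Let Γ_k be the set of partial weak endomorphisms α of S_n that are not partial strong endomorphisms and satisfy k = min({1,...,n−1} \ ({1,...,n−1}α)) and either 0 ∉ dom(α) or (0 ∈ dom(α) and 0α = 0). Then |Γ_k| = |D_k|. -/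
variable {V : Type*}

/-- Partial transformations of `V`. -/
abbrev PTrans (V : Type*) := V → Option V

/-- Monoid of partial transformations under (left-to-right) composition. -/
instance : Monoid (PTrans V) where
  mul f g := fun v => (f v).bind g
  one := fun v => some v
  mul_assoc f g h := by
    funext v
    show ((f v).bind g).bind h = (f v).bind (fun x => (g x).bind h)
    cases f v <;> simp
  one_mul f := by funext v; rfl
  mul_one f := by
    funext v
    show (f v).bind (fun x => some x) = f v
    cases f v <;> simp

/-- Domain of a partial transformation. -/
def pdom (α : PTrans V) : Set V := {u | α u ≠ none}

/-- Image of a partial transformation. -/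
def pim (α : PTrans V) : Set V := {v | ∃ u, α u = some v}

def IsPEnd (G : SimpleGraph V) (α : PTrans V) : Prop :=
  ∀ u v u' v', α u = some u' → α v = some v' → G.Adj u v → G.Adj u' v'

def IsPwEnd (G : SimpleGraph V) (α : PTrans V) : Prop :=
  ∀ u v u' v', α u = some u' → α v = some v' → G.Adj u v → u' ≠ v' → G.Adj u' v'

def IsPsEnd (G : SimpleGraph V) (α : PTrans V) : Prop :=
  ∀ u v u' v', α u = some u' → α v = some v' → (G.Adj u v ↔ G.Adj u' v')

def IsPswEnd (G : SimpleGraph V) (α : PTrans V) : Prop :=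
  ∀ u v u' v', α u = some u' → α v = some v' → ((G.Adj u v ∧ u' ≠ v') ↔ G.Adj u' v')

/-- Injectivity of a partial transformation. -/
def PInjective (α : PTrans V) : Prop :=
  ∀ u v w, α u = some w → α v = some w → u = v

open Classical in
/-- The inverse of a partial (injective) transformation. -/
noncomputable def pinv (α : PTrans V) : PTrans V :=
  fun v => if h : ∃ u, α u = some v then some h.choose else none

/-- Partial automorphism: injective, and both it and its inverse are
partial endomorphisms. -/
def IsPAut (G : SimpleGraph V) (α : PTrans V) : Prop :=
  PInjective α ∧ IsPEnd G α ∧ IsPEnd G (pinv α)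

/-- The star graph on vertices `{0,1,...,n-1}` with center `0`. -/
def starGraph (n : ℕ) : SimpleGraph (Fin n) :=
  SimpleGraph.fromRel (fun u _ => (u : ℕ) = 0)


section Star

/-- Swap the values `z` and `K` on all inputs except `z` itself. -/
def phiAux {n : ℕ} (z K : Fin n) (α : PTrans (Fin n)) : PTrans (Fin n) :=
  fun v => if v = z then α v else (α v).map (Equiv.swap z K)

lemma phiAux_z {n : ℕ} (z K : Fin n) (α : PTrans (Fin n)) : phiAux z K α z = α z :=
  if_pos rfl

lemma phiAux_ne {n : ℕ} (z K : Fin n) (α : PTrans (Fin n)) {v : Fin n} (hv : v ≠ z) :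
    phiAux z K α v = (α v).map (Equiv.swap z K) := if_neg hv

lemma phiAux_invol {n : ℕ} (z K : Fin n) (α : PTrans (Fin n)) :
    phiAux z K (phiAux z K α) = α := by
  funext v
  by_cases hv : v = z
  · subst hv; rw [phiAux_z, phiAux_z]
  · rw [phiAux_ne _ _ _ hv, phiAux_ne _ _ _ hv, Option.map_map]
    cases α v <;> simp [Equiv.swap_apply_self]

lemma star_adj {n : ℕ} (hn : 0 < n) (u v : Fin n) :
    (starGraph n).Adj u v ↔ u ≠ v ∧ (u = ⟨0, hn⟩ ∨ v = ⟨0, hn⟩) := by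
  simp [starGraph, SimpleGraph.fromRel_adj, Fin.ext_iff]

lemma sInf_char {S : Set ℕ} {k : ℕ} (hk : 1 ≤ k) (h : k = sInf S) :
    k ∈ S ∧ ∀ m ∈ S, k ≤ m := by
  have hne : S.Nonempty := by
    by_contra hc
    rw [Set.not_nonempty_iff_eq_empty] at hc
    rw [hc, Nat.sInf_empty] at h
    omega
  exact ⟨h ▸ Nat.sInf_mem hne, fun m hm => h ▸ Nat.sInf_le hm⟩

lemma sInf_char' {S : Set ℕ} {k : ℕ} (h1 : k ∈ S) (h2 : ∀ m ∈ S, k ≤ m) :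
    k = sInf S :=
  le_antisymm (h2 _ (Nat.sInf_mem ⟨k, h1⟩)) (Nat.sInf_le h1)

end Star

theorem stmt16 (n k : ℕ) (hn : 3 ≤ n) (hk1 : 1 ≤ k) (hk2 : k ≤ n - 1) :
    Set.ncard {α : PTrans (Fin n) | IsPwEnd (starGraph n) α ∧ ¬ IsPsEnd (starGraph n) α ∧
        k = sInf {m : ℕ | 1 ≤ m ∧ m ≤ n - 1 ∧
          ∀ i : Fin n, i ≠ ⟨0, by omega⟩ → ∀ j, α i = some j → (j : ℕ) ≠ m} ∧
        (α ⟨0, by omega⟩ = none ∨ α ⟨0, by omega⟩ = some ⟨0, by omega⟩)} =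
    Set.ncard {α : PTrans (Fin n) | IsPsEnd (starGraph n) α ∧
        (∀ j : Fin n, 1 ≤ (j : ℕ) → (j : ℕ) ≤ k → j ∈ pim α) ∧
        (α ⟨0, by omega⟩ = some ⟨0, by omega⟩ ∨
          (α ⟨0, by omega⟩ = none ∧ 2 ≤ (pim α).ncard))} := by
  have hn0 : 0 < n := by omega
  have hkn : k < n := by omega
  set z : Fin n := ⟨0, hn0⟩ with hzdef
  set K : Fin n := ⟨k, hkn⟩ with hKdef
  have hzK : z ≠ K := by simp [hzdef, hKdef, Fin.ext_iff]; omega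
  set σ : Equiv.Perm (Fin n) := Equiv.swap z K with hσdef
  have hσz : σ z = K := Equiv.swap_apply_left z K
  have hσK : σ K = z := Equiv.swap_apply_right z K
  have hσo : ∀ x : Fin n, x ≠ z → x ≠ K → σ x = x :=
    fun x h1 h2 => Equiv.swap_apply_of_ne_of_ne h1 h2
  have hadj : ∀ u v : Fin n, (starGraph n).Adj u v ↔ u ≠ v ∧ (u = z ∨ v = z) :=
    star_adj hn0
  -- Direction 1 : Γ → D
  have key1 : ∀ α : PTrans (Fin n),
      IsPwEnd (starGraph n) α → ¬ IsPsEnd (starGraph n) α →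
      k = sInf {m : ℕ | 1 ≤ m ∧ m ≤ n - 1 ∧
          ∀ i : Fin n, i ≠ z → ∀ j, α i = some j → (j : ℕ) ≠ m} →
      (α z = none ∨ α z = some z) →
      IsPsEnd (starGraph n) (phiAux z K α) ∧
        (∀ j : Fin n, 1 ≤ (j : ℕ) → (j : ℕ) ≤ k → j ∈ pim (phiAux z K α)) ∧
        (phiAux z K α z = some z ∨
          (phiAux z K α z = none ∧ 2 ≤ (pim (phiAux z K α)).ncard)) := by
    intro α _hw hns hmin hαz
    obtain ⟨hkS, hlb⟩ := sInf_char hk1 hmin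
    obtain ⟨-, -, hKfree⟩ := hkS
    have hbelow : ∀ m : ℕ, 1 ≤ m → m < k →
        ∃ i, ∃ j : Fin n, i ≠ z ∧ α i = some j ∧ (j : ℕ) = m := by
      intro m hm1 hmk
      by_contra hc
      push_neg at hc
      have hmem : m ∈ {m : ℕ | 1 ≤ m ∧ m ≤ n - 1 ∧
          ∀ i : Fin n, i ≠ z → ∀ j, α i = some j → (j : ℕ) ≠ m} :=
        ⟨hm1, by omega, fun i hi j hj => hc i j hi hj⟩
      have := hlb m hmem; omega
    -- witnesses from "not strong"
    have hwit : (∃ v, v ≠ z ∧ α v = some z) ∧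
        (α z = none → ∃ v v', v ≠ z ∧ v' ≠ z ∧ α v = some v') := by
      rw [IsPsEnd] at hns; push_neg at hns
      obtain ⟨u, v, u', v', hu, hv, hne⟩ := hns
      have hne' : ((starGraph n).Adj u v ∧ ¬ (starGraph n).Adj u' v') ∨
          (¬ (starGraph n).Adj u v ∧ (starGraph n).Adj u' v') := by tauto
      rcases hne' with ⟨h1, h2⟩ | ⟨h1, h2⟩
      · rw [hadj] at h1 h2
        obtain ⟨huv, hz'⟩ := h1
        have hαzz : α z = some z := by
          rcases hz' with rfl | rfl
          · rcases hαz with h | h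
            · rw [h] at hu; cases hu
            · exact h
          · rcases hαz with h | h
            · rw [h] at hv; cases hv
            · exact h
        rcases hz' with rfl | rfl
        · have hu' : u' = z := by
            rw [hαzz] at hu; exact (Option.some_inj.mp hu).symm
          subst hu'
          have hv' : v' = z := by
            by_contra hcc
            exact h2 ⟨fun hh => hcc hh.symm, Or.inl rfl⟩
          subst hv'
          exact ⟨⟨v, fun hh => huv hh.symm, hv⟩,
            fun h => by rw [h] at hαzz; cases hαzz⟩
        · have hv' : v' = z := by
            rw [hαzz] at hv; exact (Option.some_inj.mp hv).symm
          subst hv'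
          have hu' : u' = z := by
            by_contra hcc
            exact h2 ⟨fun hh => hcc hh, Or.inr rfl⟩
          subst hu'
          exact ⟨⟨u, huv, hu⟩, fun h => by rw [h] at hαzz; cases hαzz⟩
      · rw [hadj] at h1 h2
        obtain ⟨hne'', hz'⟩ := h2
        rcases hz' with rfl | rfl
        · -- u' = z, so v' ≠ z
          have hv'z : v' ≠ z := fun hh => hne'' hh.symm
          have huz : u ≠ z := by
            intro hh; subst hh
            have hαzz : α z = some z := by
              rcases hαz with h | h
              · rw [h] at hu; cases hu
              · exact h
            have hvz : v = z := by
              by_contra hcc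
              exact h1 ⟨fun hh => hcc hh.symm, Or.inl rfl⟩
            subst hvz
            rw [hαzz] at hv
            exact hv'z (Option.some_inj.mp hv).symm
          have hvz : v ≠ z := by
            intro hh; subst hh
            rcases hαz with h | h
            · rw [h] at hv; cases hv
            · rw [h] at hv; exact hv'z (Option.some_inj.mp hv).symm
          exact ⟨⟨u, huz, hu⟩, fun _ => ⟨v, v', hvz, hv'z, hv⟩⟩
        · -- v' = z, so u' ≠ z
          have hu'z : u' ≠ z := hne''
          have hvz : v ≠ z := by
            intro hh; subst hh
            have hαzz : α z = some z := by
              rcases hαz with h | h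
              · rw [h] at hv; cases hv
              · exact h
            have huz : u = z := by
              by_contra hcc
              exact h1 ⟨fun hh => hcc hh, Or.inr rfl⟩
            subst huz
            rw [hαzz] at hu
            exact hu'z (Option.some_inj.mp hu).symm
          have huz : u ≠ z := by
            intro hh; subst hh
            rcases hαz with h | h
            · rw [h] at hu; cases hu
            · rw [h] at hu; exact hu'z (Option.some_inj.mp hu).symm
          exact ⟨⟨v, hvz, hv⟩, fun _ => ⟨u, u', huz, hu'z, hu⟩⟩
    obtain ⟨⟨v₀, hv₀z, hv₀⟩, hcase2⟩ := hwit
    -- values of phiAux on nonzero inputs are nonzero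
    have hβnz : ∀ i j : Fin n, i ≠ z → phiAux z K α i = some j → j ≠ z := by
      intro i j hi hj
      rw [phiAux_ne _ _ _ hi] at hj
      cases hαi : α i with
      | none => rw [hαi] at hj; cases hj
      | some j₀ =>
        rw [hαi] at hj
        simp only [Option.map_some] at hj
        have hjj : σ j₀ = j := Option.some_inj.mp hj
        have hj₀K : j₀ ≠ K := fun h => hKfree i hi j₀ hαi (by rw [h])
        by_cases hj₀z : j₀ = z
        · subst hj₀z; rw [hσz] at hjj; rw [← hjj]; exact fun h => hzK h.symm
        · rw [hσo j₀ hj₀z hj₀K] at hjj; rw [← hjj]; exact hj₀z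
    refine ⟨?_, ?_, ?_⟩
    · -- strong
      intro u v u' v' hu hv
      rw [hadj, hadj]
      by_cases huz : u = z
      · subst huz
        have hαzz : α z = some z := by
          rcases hαz with h | h
          · rw [phiAux_z, h] at hu; cases hu
          · exact h
        have hu' : u' = z := by
          rw [phiAux_z, hαzz] at hu; exact (Option.some_inj.mp hu).symm
        subst hu'
        by_cases hvz : v = z
        · subst hvz
          have hv' : v' = z := by
            rw [phiAux_z, hαzz] at hv; exact (Option.some_inj.mp hv).symm
          subst hv'
          simp
        · have hv' : v' ≠ z := hβnz v v' hvz hv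
          simp [Ne.symm hvz, Ne.symm hv']
      · by_cases hvz : v = z
        · subst hvz
          have hαzz : α z = some z := by
            rcases hαz with h | h
            · rw [phiAux_z, h] at hv; cases hv
            · exact h
          have hv' : v' = z := by
            rw [phiAux_z, hαzz] at hv; exact (Option.some_inj.mp hv).symm
          subst hv'
          have hu' : u' ≠ z := hβnz u u' huz hu
          simp [huz, hu']
        · have hu' : u' ≠ z := hβnz u u' huz hu
          have hv' : v' ≠ z := hβnz v v' hvz hv
          simp [huz, hvz, hu', hv']
    · -- image contains 1..k
      intro j hj1 hjk
      simp only [pim, Set.mem_setOf_eq]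
      by_cases hjK : (j : ℕ) = k
      · have hjK' : j = K := by rw [hKdef]; exact Fin.ext hjK
        subst hjK'
        exact ⟨v₀, by rw [phiAux_ne _ _ _ hv₀z, hv₀]; simp [hσz]⟩
      · obtain ⟨i, j₀, hiz, hαi, hj₀⟩ := hbelow (j : ℕ) hj1 (by omega)
        have hj₀z : j₀ ≠ z := by
          intro hh; rw [hh] at hj₀; simp [hzdef] at hj₀; omega
        have hj₀K : j₀ ≠ K := by
          intro hh; rw [hh] at hj₀; simp [hKdef] at hj₀; omega
        have hj₀j : j₀ = j := Fin.ext (by rw [hj₀])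
        refine ⟨i, ?_⟩
        rw [phiAux_ne _ _ _ hiz, hαi]
        simp only [Option.map_some]
        rw [show (Equiv.swap z K) j₀ = σ j₀ from rfl, hσo j₀ hj₀z hj₀K, hj₀j]
    · -- last condition
      rcases hαz with h | h
      · right
        refine ⟨by rw [phiAux_z]; exact h, ?_⟩
        obtain ⟨v, v', hvz, hv'z, hv⟩ := hcase2 h
        have hv'K : v' ≠ K := fun hh => hKfree v hvz v' hv (by rw [hh])
        have h1 : K ∈ pim (phiAux z K α) :=
          ⟨v₀, by rw [phiAux_ne _ _ _ hv₀z, hv₀]; simp [hσz]⟩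
        have h2 : v' ∈ pim (phiAux z K α) :=
          ⟨v, by rw [phiAux_ne _ _ _ hvz, hv]; simp; exact hσo v' hv'z hv'K⟩
        have hfin : (pim (phiAux z K α)).Finite := Set.toFinite _
        have : 1 < (pim (phiAux z K α)).ncard := by
          rw [Set.one_lt_ncard_iff hfin]
          exact ⟨K, v', h1, h2, Ne.symm hv'K⟩
        omega
      · left; rw [phiAux_z]; exact h
  -- Direction 2 : D → Γ
  have key2 : ∀ β : PTrans (Fin n),
      IsPsEnd (starGraph n) β →
      (∀ j : Fin n, 1 ≤ (j : ℕ) → (j : ℕ) ≤ k → j ∈ pim β) →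
      (β z = some z ∨ (β z = none ∧ 2 ≤ (pim β).ncard)) →
      IsPwEnd (starGraph n) (phiAux z K β) ∧
        ¬ IsPsEnd (starGraph n) (phiAux z K β) ∧
        k = sInf {m : ℕ | 1 ≤ m ∧ m ≤ n - 1 ∧
          ∀ i : Fin n, i ≠ z → ∀ j, phiAux z K β i = some j → (j : ℕ) ≠ m} ∧
        (phiAux z K β z = none ∨ phiAux z K β z = some z) := by
    intro β hs him hβz
    have hKk : (K : ℕ) = k := rfl
    -- values on nonzero inputs are nonzero
    have hnz : ∀ i j : Fin n, i ≠ z → β i = some j → j ≠ z := by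
      intro i j hi hj hjz
      subst hjz
      rcases hβz with h | ⟨h, hc⟩
      · have hiff := hs z i z z h hj
        rw [hadj, hadj] at hiff
        exact (hiff.mp ⟨Ne.symm hi, Or.inl rfl⟩).1 rfl
      · obtain ⟨w, hw⟩ := him K hk1 le_rfl
        have hwz : w ≠ z := by
          intro hh; subst hh; rw [h] at hw; cases hw
        have hwi : w ≠ i := by
          intro hh; subst hh
          rw [hj] at hw
          exact hzK (Option.some_inj.mp hw)
        have hiff := hs i w z K hj hw
        rw [hadj, hadj] at hiff
        have h' := hiff.mpr ⟨hzK, Or.inl rfl⟩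
        rcases h'.2 with hh | hh
        · exact hi hh
        · exact hwz hh
    -- K is attained by β on a nonzero input
    obtain ⟨w, hw⟩ := him K hk1 le_rfl
    have hwz : w ≠ z := by
      intro hh; subst hh
      rcases hβz with h | ⟨h, -⟩
      · rw [h] at hw; exact hzK (Option.some_inj.mp hw)
      · rw [h] at hw; cases hw
    have hΦw : phiAux z K β w = some z := by
      rw [phiAux_ne _ _ _ hwz, hw]; simp [hσK]
    refine ⟨?_, ?_, ?_, ?_⟩
    · -- weak
      intro u v u' v' hu hv hadj' hne
      rw [hadj] at hadj' ⊢
      obtain ⟨huv, hz'⟩ := hadj'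
      rcases hz' with rfl | rfl
      · have hβzz : β z = some z := by
          rcases hβz with h | ⟨h, -⟩
          · exact h
          · rw [phiAux_z, h] at hu; cases hu
        have hu' : u' = z := by
          rw [phiAux_z, hβzz] at hu; exact (Option.some_inj.mp hu).symm
        subst hu'
        exact ⟨hne, Or.inl rfl⟩
      · have hβzz : β z = some z := by
          rcases hβz with h | ⟨h, -⟩
          · exact h
          · rw [phiAux_z, h] at hv; cases hv
        have hv' : v' = z := by
          rw [phiAux_z, hβzz] at hv; exact (Option.some_inj.mp hv).symm
        subst hv'
        exact ⟨hne, Or.inr rfl⟩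
    · -- not strong
      intro hs'
      rcases hβz with h | ⟨h, hc⟩
      · have hiff := hs' z w z z (by rw [phiAux_z]; exact h) hΦw
        rw [hadj, hadj] at hiff
        exact (hiff.mp ⟨Ne.symm hwz, Or.inl rfl⟩).1 rfl
      · obtain ⟨c, hcmem, hcK⟩ := Set.exists_ne_of_one_lt_ncard (s := pim β) (by omega) K
        simp only [pim, Set.mem_setOf_eq] at hcmem
        obtain ⟨x, hx⟩ := hcmem
        have hxz : x ≠ z := by
          intro hh; subst hh; rw [h] at hx; cases hx
        have hcz : c ≠ z := hnz x c hxz hx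
        have hxw : x ≠ w := by
          intro hh; subst hh
          rw [hw] at hx
          exact hcK (Option.some_inj.mp hx).symm
        have hΦx : phiAux z K β x = some c := by
          rw [phiAux_ne _ _ _ hxz, hx]; simp; exact hσo c hcz hcK
        have hiff := hs' x w c z hΦx hΦw
        rw [hadj, hadj] at hiff
        have h' := hiff.mpr ⟨hcz, Or.inr rfl⟩
        rcases h'.2 with hh | hh
        · exact hxz hh
        · exact hwz hh
    · -- sInf
      apply sInf_char'
      · refine ⟨hk1, hk2, ?_⟩
        intro i hi j hj hjk
        have hjK : j = K := by rw [hKdef]; exact Fin.ext hjk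
        subst hjK
        rw [phiAux_ne _ _ _ hi] at hj
        cases hβi : β i with
        | none => rw [hβi] at hj; cases hj
        | some j₀ =>
          rw [hβi] at hj
          simp only [Option.map_some] at hj
          have hσj : σ j₀ = K := Option.some_inj.mp hj
          have hj₀z : j₀ = z := by
            have := congrArg σ hσj
            rwa [hσdef, Equiv.swap_apply_self, ← hσdef, hσK] at this
          exact hnz i j₀ hi hβi hj₀z
      · intro m hm
        obtain ⟨hm1, hmn, hmfree⟩ := hm
        by_contra hcc
        push_neg at hcc
        have hmn' : m < n := by omega
        have hjm : ((⟨m, hmn'⟩ : Fin n) : ℕ) = m := rfl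
        obtain ⟨i, hi⟩ := him ⟨m, hmn'⟩ (by rw [hjm]; exact hm1) (by rw [hjm]; omega)
        have hjz : (⟨m, hmn'⟩ : Fin n) ≠ z := by
          simp [hzdef, Fin.ext_iff]; omega
        have hjK : (⟨m, hmn'⟩ : Fin n) ≠ K := by
          simp [hKdef, Fin.ext_iff]; omega
        have hiz : i ≠ z := by
          intro hh; subst hh
          rcases hβz with h | ⟨h, -⟩
          · rw [h] at hi
            have := Option.some_inj.mp hi
            rw [← this] at hjz
            exact hjz rfl
          · rw [h] at hi; cases hi
        have hΦi : phiAux z K β i = some ⟨m, hmn'⟩ := by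
          rw [phiAux_ne _ _ _ hiz, hi]; simp
          exact hσo _ hjz hjK
        exact hmfree i hiz _ hΦi rfl
    · rcases hβz with h | ⟨h, -⟩
      · right; rw [phiAux_z]; exact h
      · left; rw [phiAux_z]; exact h
  -- Conclusion
  have hinj : Function.Injective (phiAux z K) :=
    Function.LeftInverse.injective (g := phiAux z K) (phiAux_invol z K)
  have main :
      Set.ncard {α : PTrans (Fin n) | IsPwEnd (starGraph n) α ∧ ¬ IsPsEnd (starGraph n) α ∧
        k = sInf {m : ℕ | 1 ≤ m ∧ m ≤ n - 1 ∧
          ∀ i : Fin n, i ≠ z → ∀ j, α i = some j → (j : ℕ) ≠ m} ∧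
        (α z = none ∨ α z = some z)} =
      Set.ncard {α : PTrans (Fin n) | IsPsEnd (starGraph n) α ∧
        (∀ j : Fin n, 1 ≤ (j : ℕ) → (j : ℕ) ≤ k → j ∈ pim α) ∧
        (α z = some z ∨ (α z = none ∧ 2 ≤ (pim α).ncard))} := by
    have himg : phiAux z K '' {α : PTrans (Fin n) | IsPwEnd (starGraph n) α ∧
        ¬ IsPsEnd (starGraph n) α ∧
        k = sInf {m : ℕ | 1 ≤ m ∧ m ≤ n - 1 ∧
          ∀ i : Fin n, i ≠ z → ∀ j, α i = some j → (j : ℕ) ≠ m} ∧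
        (α z = none ∨ α z = some z)} =
        {α : PTrans (Fin n) | IsPsEnd (starGraph n) α ∧
        (∀ j : Fin n, 1 ≤ (j : ℕ) → (j : ℕ) ≤ k → j ∈ pim α) ∧
        (α z = some z ∨ (α z = none ∧ 2 ≤ (pim α).ncard))} := by
      ext β
      constructor
      · rintro ⟨α, ⟨h1, h2, h3, h4⟩, rfl⟩
        exact key1 α h1 h2 h3 h4
      · intro hβ
        obtain ⟨h1, h2, h3⟩ := hβ
        exact ⟨phiAux z K β, key2 β h1 h2 h3, phiAux_invol z K β⟩
    rw [← himg, Set.ncard_image_of_injective _ hinj]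
  exact main
end

section
/- Let n ≥ 3 and let S_n be the star graph on vertices {0,1,...,n−1} with center 0. Then the cardinality of the monoid of injective partial endomorphisms is |IEnd(S_n)| = 3 + 3n² − 4n + ∑_{k=2}^{n−1} (C(n,k) + C(n−1,k))·C(n−1,k)·k!. -/
variable {V : Type*}

/-!
Sort an injective partial endomorphism `α` of the star by the image of the centre `0`.
If `0 ∉ dom α`, `α` is any partial injection of the `n - 1` leaves into the `n` vertices;
if `α 0 = 0`, it maps leaves injectively to leaves; if `α 0` is a leaf, every leaf in the
domain must go to `0`, the only neighbour of `α 0`, so at most one leaf lies in the domain.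
A partial injection of an `a`-set into a `t`-set is an embedding of a `k`-subset, so there are
`∑ₖ C(a, k) t^(k)` of them, and
`C(n-1, k) (n^(k) + (n-1)^(k)) = (C(n, k) + C(n-1, k)) C(n-1, k) k!`.
-/

open Finset

section PartialInjection

variable {A B : Type*}

def IsPartialInjection (f : A → Option B) : Prop :=
  ∀ a a' b, f a = some b → f a' = some b → a = a'

abbrev PartialInjectionInto (A : Type*) (T : Finset B) : Type _ :=
  {f : A → Option B // IsPartialInjection f ∧ ∀ a, ∀ b ∈ f a, b ∈ T}

variable [DecidableEq A] {T : Finset B}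

def PartialInjectionInto.ofEmbedding (x : Σ s : Finset A, (s ↪ T)) : PartialInjectionInto A T :=
  ⟨fun a => if h : a ∈ x.1 then some (x.2 ⟨a, h⟩) else none, by
    refine ⟨fun a a' b ha ha' => ?_, fun a b hb => ?_⟩
    · dsimp only at ha ha'
      split_ifs at ha ha'
      simp only [Option.some.injEq] at ha ha'
      exact congrArg Subtype.val (x.2.injective (Subtype.ext (ha.trans ha'.symm)))
    · dsimp only at hb
      split_ifs at hb
      · exact Option.mem_some_iff.mp hb ▸ (x.2 _).2
      · cases hb⟩

theorem PartialInjectionInto.ofEmbedding_bijective [Fintype A] :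
    Function.Bijective
      (ofEmbedding : (Σ s : Finset A, (s ↪ T)) → PartialInjectionInto A T) := by
  constructor
  · rintro ⟨s, e⟩ ⟨t, e'⟩ h
    have hval := congrArg Subtype.val h
    obtain rfl : s = t := by
      ext a
      have := congrFun hval a
      by_cases ha : a ∈ s <;> by_cases ha' : a ∈ t <;> simp [ofEmbedding, ha, ha'] at this ⊢
    obtain rfl : e = e' := by
      ext ⟨a, ha⟩
      simpa [ofEmbedding, ha] using congrFun hval a
    rfl
  · rintro ⟨f, hf, hT⟩
    have hdom {a : A} (ha : a ∈ univ.filter fun a => (f a).isSome) : (f a).isSome := by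
      simpa using ha
    refine ⟨⟨univ.filter fun a => (f a).isSome,
      ⟨fun a => ⟨(f a).get (hdom a.2), hT _ _ (Option.get_mem _)⟩, fun a a' h => ?_⟩⟩,
      ?_⟩
    · have h' : (f a).get (hdom a.2) = (f a').get (hdom a'.2) := congrArg Subtype.val h
      exact Subtype.ext (hf _ _ _ (Option.some_get (hdom a.2)).symm
        (h' ▸ (Option.some_get (hdom a'.2)).symm))
    · apply Subtype.ext
      funext a
      by_cases ha : (f a).isSome
      · simp only [ofEmbedding, mem_filter, mem_univ, true_and, ha, dite_true]
        exact Option.some_get ha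
      · simp_all [ofEmbedding]

theorem PartialInjectionInto.natCard_eq_sum [Fintype A] :
    Nat.card (PartialInjectionInto A T) =
      ∑ k ∈ range (Fintype.card A + 1), (Fintype.card A).choose k * (#T).descFactorial k := by
  rw [← Nat.card_congr (Equiv.ofBijective _ ofEmbedding_bijective), Nat.card_eq_fintype_card,
    Fintype.card_sigma]
  simp_rw [Fintype.card_embedding_eq, Fintype.card_coe]
  rw [← powerset_univ, sum_powerset_apply_card]
  simp

end PartialInjection

section Star

variable {m : ℕ}

theorem starGraph_adj {n : ℕ} [NeZero n] {u v : Fin n} :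
    (starGraph n).Adj u v ↔ u ≠ v ∧ (u = 0 ∨ v = 0) := by
  simp [starGraph, Fin.val_eq_zero_iff]

theorem pInjective_cons_iff (x : Option (Fin (m + 1))) (f : Fin m → Option (Fin (m + 1))) :
    PInjective (Fin.cons x f : PTrans (Fin (m + 1))) ↔
      IsPartialInjection f ∧ ∀ c ∈ x, ∀ i, f i ≠ some c := by
  constructor
  · intro h
    refine ⟨fun a a' b ha ha' => Fin.succ_injective _ (h a.succ a'.succ b ha ha'),
      fun c hc i hi => Fin.succ_ne_zero i (h _ 0 c hi hc)⟩
  · rintro ⟨hf, hx⟩ u v w hu hv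
    induction u using Fin.cases <;> induction v using Fin.cases <;>
      simp only [Fin.cons_zero, Fin.cons_succ] at hu hv
    · rfl
    · exact (hx w hu _ hv).elim
    · exact (hx w hv _ hu).elim
    · exact congrArg Fin.succ (hf _ _ w hu hv)

theorem isPEnd_starGraph_cons_iff (x : Option (Fin (m + 1))) (f : Fin m → Option (Fin (m + 1))) :
    IsPEnd (starGraph (m + 1)) (Fin.cons x f : PTrans (Fin (m + 1))) ↔
      ∀ c ∈ x, ∀ i, ∀ d ∈ f i, c ≠ d ∧ (c = 0 ∨ d = 0) := by
  constructor
  · intro h c hc i d hd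
    have hadj : (starGraph (m + 1)).Adj 0 i.succ :=
      starGraph_adj.mpr ⟨(Fin.succ_ne_zero i).symm, .inl rfl⟩
    exact starGraph_adj.mp (h 0 i.succ c d hc hd hadj)
  · intro h u v u' v' hu hv huv
    induction u using Fin.cases <;> induction v using Fin.cases <;>
      simp only [Fin.cons_zero, Fin.cons_succ] at hu hv
    · exact (huv.ne rfl).elim
    · exact starGraph_adj.mpr (h u' hu _ v' hv)
    · exact (starGraph_adj.mpr (h v' hv _ u' hu)).symm
    · simpa using (starGraph_adj.mp huv).2

end Star

section StarCount

variable (m : ℕ)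

/-- Vertex `i.succ` is the `i`-th leaf, and `f` is the restriction of `α = Fin.cons x f` to the
leaves. -/
abbrev StarPEndFiber (x : Option (Fin (m + 1))) : Type :=
  {f : Fin m → Option (Fin (m + 1)) //
    PInjective (Fin.cons x f : PTrans (Fin (m + 1))) ∧
      IsPEnd (starGraph (m + 1)) (Fin.cons x f : PTrans (Fin (m + 1)))}

theorem card_pInjective_isPEnd_starGraph_eq_sum_fiber :
    Nat.card {α : PTrans (Fin (m + 1)) // PInjective α ∧ IsPEnd (starGraph (m + 1)) α} =
      Nat.card (StarPEndFiber m none) + Nat.card (StarPEndFiber m (some 0)) +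
        ∑ c : Fin m, Nat.card (StarPEndFiber m (some c.succ)) := by
  have e : {α : PTrans (Fin (m + 1)) // PInjective α ∧ IsPEnd (starGraph (m + 1)) α} ≃
      Σ x, StarPEndFiber m x :=
    ((Fin.consEquiv fun _ => Option (Fin (m + 1))).subtypeEquiv fun _ => Iff.rfl).symm.trans
      (Equiv.subtypeProdEquivSigmaSubtype fun x f =>
        PInjective (Fin.cons x f : PTrans (Fin (m + 1))) ∧
          IsPEnd (starGraph (m + 1)) (Fin.cons x f : PTrans (Fin (m + 1))))
  rw [Nat.card_congr e, Nat.card_sigma, Fintype.sum_option, Fin.sum_univ_succ, add_assoc]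

theorem card_starPEndFiber_none :
    Nat.card (StarPEndFiber m none) =
      ∑ k ∈ range (m + 1), m.choose k * (m + 1).descFactorial k := by
  have e : StarPEndFiber m none ≃ PartialInjectionInto (Fin m) (univ : Finset (Fin (m + 1))) :=
    Equiv.subtypeEquivRight fun f => by
      simp [pInjective_cons_iff, isPEnd_starGraph_cons_iff]
  rw [Nat.card_congr e, PartialInjectionInto.natCard_eq_sum, Fintype.card_fin, card_univ,
    Fintype.card_fin]

theorem card_starPEndFiber_zero :
    Nat.card (StarPEndFiber m (some 0)) =
      ∑ k ∈ range (m + 1), m.choose k * m.descFactorial k := by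
  have e : StarPEndFiber m (some 0) ≃
      PartialInjectionInto (Fin m) ({0}ᶜ : Finset (Fin (m + 1))) :=
    Equiv.subtypeEquivRight fun f => by
      simp only [pInjective_cons_iff, isPEnd_starGraph_cons_iff, Option.mem_def,
        Option.some.injEq, ne_eq, forall_eq', true_or, and_true, mem_compl, mem_singleton]
      exact ⟨fun ⟨⟨hf, _⟩, h⟩ => ⟨hf, fun a b hb => Ne.symm (h a b hb)⟩,
        fun ⟨hf, h⟩ =>
          ⟨⟨hf, fun i hi => h i 0 hi rfl⟩, fun i d hd => Ne.symm (h i d hd)⟩⟩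
  rw [Nat.card_congr e, PartialInjectionInto.natCard_eq_sum, Fintype.card_fin, card_compl,
    card_singleton, Fintype.card_fin, Nat.add_sub_cancel]

theorem card_starPEndFiber_succ (c : Fin m) :
    Nat.card (StarPEndFiber m (some c.succ)) = m + 1 := by
  have e : StarPEndFiber m (some c.succ) ≃
      PartialInjectionInto (Fin m) ({0} : Finset (Fin (m + 1))) :=
    Equiv.subtypeEquivRight fun f => by
      simp only [pInjective_cons_iff, isPEnd_starGraph_cons_iff, Option.mem_def,
        Option.some.injEq, ne_eq, forall_eq', Fin.succ_ne_zero, false_or, mem_singleton]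
      exact ⟨fun ⟨⟨hf, _⟩, h⟩ => ⟨hf, fun a b hb => (h a b hb).2⟩,
        fun ⟨hf, h⟩ => ⟨⟨hf, fun i hi => c.succ_ne_zero (h i _ hi)⟩,
          fun i d hd => ⟨fun hc => c.succ_ne_zero (hc.trans (h i d hd)), h i d hd⟩⟩⟩
  rw [Nat.card_congr e, PartialInjectionInto.natCard_eq_sum, Fintype.card_fin,
    card_singleton, sum_eq_add 0 1 zero_ne_one]
  · simp [Nat.descFactorial_one, add_comm]
  · intro k _ hk
    rw [Nat.descFactorial_eq_zero_iff_lt.mpr (by omega), mul_zero]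
  all_goals simp

theorem card_pInjective_isPEnd_starGraph :
    Nat.card {α : PTrans (Fin (m + 1)) // PInjective α ∧ IsPEnd (starGraph (m + 1)) α} =
      ∑ k ∈ range (m + 1), m.choose k * ((m + 1).descFactorial k + m.descFactorial k) +
        m * (m + 1) := by
  simp only [card_pInjective_isPEnd_starGraph_eq_sum_fiber, card_starPEndFiber_none,
    card_starPEndFiber_zero, card_starPEndFiber_succ, sum_const, card_univ, Fintype.card_fin,
    smul_eq_mul, mul_add, sum_add_distrib]

end StarCount

theorem stmt18 (n : ℕ) (hn : 3 ≤ n) :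
    Nat.card {α : PTrans (Fin n) // PInjective α ∧ IsPEnd (starGraph n) α} =
      3 + 3 * n ^ 2 - 4 * n +
        ∑ k ∈ Finset.Icc 2 (n - 1),
          (n.choose k + (n - 1).choose k) * (n - 1).choose k * k.factorial := by
  obtain ⟨m, rfl⟩ : ∃ m, n = m + 2 + 1 := ⟨n - 3, by omega⟩
  have hIcc : Icc 2 (m + 2 + 1 - 1) = (range (m + 1)).map (addRightEmbedding 2) := by
    rw [Nat.range_succ_eq_Icc_zero, map_add_right_Icc, zero_add, Nat.add_sub_cancel]
  have hterm (k : ℕ) :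
      (m + 2).choose k * ((m + 2 + 1).descFactorial k + (m + 2).descFactorial k) =
      ((m + 2 + 1).choose k + (m + 2).choose k) * (m + 2).choose k * k.factorial := by
    rw [Nat.descFactorial_eq_factorial_mul_choose, Nat.descFactorial_eq_factorial_mul_choose]
    ring
  rw [card_pInjective_isPEnd_starGraph, sum_range_succ', sum_range_succ', hIcc, sum_map]
  simp only [hterm, addRightEmbedding_apply, Nat.add_sub_cancel]
  have hconst : 3 + 3 * (m + 2 + 1) ^ 2 - 4 * (m + 2 + 1) =
      2 + (m + 2 + 1 + (m + 2)) * (m + 2) + (m + 2) * (m + 2 + 1) := by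
    ring_nf
    omega
  simp only [add_assoc, Nat.reduceAdd, Nat.choose_zero_right, Nat.choose_one_right,
    Nat.factorial_zero, Nat.factorial_one, mul_one, hconst]
  ring
end
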